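/- arXiv:2307.15804 — 2 statements merged into one kernel-verified Lean document; each statement's English description precedes it below -/
import Mathlib

section
/- Taylor lower bound for Gegenbauer polynomials beyond their largest root: if z_{j,d} denotes the largest root of the normalized Gegenbauer polynomial P_{j,d} (with P_{j,d}(1) = 1), then P_{j,d}(t) ≥ (t - z_{j,d})^j for all t ≥ z_{j,d}. -/
/-- The Gegenbauer polynomials `C_j^λ` (standard normalization), defined by the
three-term recurrence `(j+1)C_{j+1}^λ(t) = 2(j+λ)t C_j^λ(t) - (j+2λ-1)C_{j-1}^λ(t)`
with `C_0^λ = 1`, `C_1^λ(t) = 2λt`. -/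
noncomputable def gegC (lam : ℝ) : ℕ → Polynomial ℝ
  | 0 => 1
  | 1 => Polynomial.C (2 * lam) * Polynomial.X
  | (n + 2) =>
      Polynomial.C (2 * ((n : ℝ) + 1 + lam) / ((n : ℝ) + 2)) * Polynomial.X * gegC lam (n + 1)
        - Polynomial.C (((n : ℝ) + 2 * lam) / ((n : ℝ) + 2)) * gegC lam n

/-- The Gegenbauer polynomial of degree `j` in dimension parameter `d`
(i.e. `λ = d/2 - 1`), normalized so that `P_{j,d}(1) = 1`. -/
noncomputable def gegP (j d : ℕ) : Polynomial ℝ :=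
  Polynomial.C ((gegC ((d : ℝ) / 2 - 1) j).eval 1)⁻¹ * gegC ((d : ℝ) / 2 - 1) j

/-!
Up to the positive factor `∏_{i<n} 2(λ+i)/(i+1)`, the Gegenbauer polynomial `C_n^λ` is the
characteristic polynomial of the symmetric Jacobi matrix attached to its three-term recurrence.
Hence `P_{j,d} = a ∏ᵢ (X - rᵢ)` with real eigenvalues `rᵢ`, where
`a = ∏ 2(λ+i)/(i+1) / ∏ (2λ+i)/(i+1) ≥ 1` (compare the two products factor by factor).
All `rᵢ` are roots, so `rᵢ ≤ z`, and for `t ≥ z` each factor `t - rᵢ` is at least `t - z ≥ 0`.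
-/

open Polynomial

namespace Matrix

variable {R : Type*} [CommRing R]

theorem charmatrix_submatrix_castSucc {n : ℕ} (M : Matrix (Fin (n + 1)) (Fin (n + 1)) R) :
    (charmatrix M).submatrix Fin.castSucc Fin.castSucc
      = charmatrix (M.submatrix Fin.castSucc Fin.castSucc) := by
  ext i j
  by_cases h : i = j
  · subst h; simp
  · have h' : i.castSucc ≠ j.castSucc := Fin.castSucc_inj.not.mpr h
    simp [charmatrix_apply_ne _ _ _ h', charmatrix_apply_ne _ _ _ h]

def jacobiMatrix (a b : ℕ → R) (n : ℕ) : Matrix (Fin n) (Fin n) R :=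
  of fun i k => if (i : ℕ) = k then a i else if (i : ℕ) + 1 = k then b k
    else if (k : ℕ) + 1 = i then b i else 0

variable (a b : ℕ → R)

theorem jacobiMatrix_isSymm (n : ℕ) : (jacobiMatrix a b n).IsSymm := by
  ext i k
  simp only [transpose_apply, jacobiMatrix, of_apply]
  grind

theorem jacobiMatrix_submatrix_castSucc (n : ℕ) :
    (jacobiMatrix a b (n + 1)).submatrix Fin.castSucc Fin.castSucc = jacobiMatrix a b n := by
  ext i k; simp [jacobiMatrix]

theorem charpoly_jacobiMatrix_one : (jacobiMatrix a b 1).charpoly = X - C (a 0) := by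
  simp [charpoly, jacobiMatrix]

theorem charmatrix_jacobiMatrix_eq_zero {n : ℕ} {i k : Fin n}
    (h : (i : ℕ) + 1 < k ∨ (k : ℕ) + 1 < i) :
    charmatrix (jacobiMatrix a b n) i k = 0 := by
  rw [charmatrix_apply_ne _ _ _ (by omega)]
  simp only [jacobiMatrix, of_apply]
  rw [if_neg (by omega), if_neg (by omega), if_neg (by omega), map_zero, neg_zero]

theorem det_submatrix_charmatrix_jacobiMatrix (n : ℕ) :
    ((charmatrix (jacobiMatrix a b (n + 2))).submatrix
      (Fin.last n).castSucc.succAbove (Fin.last (n + 1)).succAbove).det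
      = -C (b (n + 1)) * (jacobiMatrix a b n).charpoly := by
  rw [det_succ_row _ (Fin.last n), Fintype.sum_eq_single (Fin.last n)]
  · have hrows :
        (Fin.last n).castSucc.succAbove ∘ Fin.castSucc = Fin.castSucc ∘ Fin.castSucc :=
      funext fun i ↦ Fin.succAbove_of_castSucc_lt _ _
        (Fin.castSucc_lt_castSucc_iff.mpr i.castSucc_lt_last)
    have hsign : (-1 : R[X]) ^ ((Fin.last n : ℕ) + (Fin.last n : ℕ)) = 1 :=
      (Even.add_self _).neg_one_pow
    have hentry :
        jacobiMatrix a b (n + 2) (Fin.last (n + 1)) (Fin.last n).castSucc = b (n + 1) := by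
      simp [jacobiMatrix]; omega
    rw [submatrix_submatrix, submatrix_apply, Fin.succAbove_last, Fin.succAbove_last,
      Fin.succAbove_castSucc_self, Fin.succ_last, hrows, ← submatrix_submatrix,
      charmatrix_submatrix_castSucc, jacobiMatrix_submatrix_castSucc,
      charmatrix_submatrix_castSucc, jacobiMatrix_submatrix_castSucc,
      charmatrix_apply_ne _ _ _ (by simp [Fin.ext_iff]), hentry, hsign, one_mul]
    rfl
  · intro k hk
    have hk := Fin.val_ne_of_ne hk
    simp only [Fin.val_last] at hk
    rw [submatrix_apply, Fin.succAbove_last, Fin.succAbove_castSucc_self,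
      charmatrix_jacobiMatrix_eq_zero _ _
        (by simp only [Fin.val_succ, Fin.val_last, Fin.val_castSucc]; omega),
      mul_zero, zero_mul]

theorem charpoly_jacobiMatrix_succ_succ (n : ℕ) :
    (jacobiMatrix a b (n + 2)).charpoly
      = (X - C (a (n + 1))) * (jacobiMatrix a b (n + 1)).charpoly
        - C (b (n + 1) ^ 2) * (jacobiMatrix a b n).charpoly := by
  have hdiag : jacobiMatrix a b (n + 2) (Fin.last (n + 1)) (Fin.last (n + 1)) = a (n + 1) := by
    simp [jacobiMatrix]
  have hentry : jacobiMatrix a b (n + 2) (Fin.last n).castSucc (Fin.last (n + 1)) = b (n + 1) := by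
    simp [jacobiMatrix]
  change (charmatrix (jacobiMatrix a b (n + 2))).det = _
  rw [det_succ_column _ (Fin.last _),
    Fintype.sum_eq_add (Fin.last _) (Fin.castSucc (Fin.last n)) (by simp [Fin.ext_iff])]
  · rw [det_submatrix_charmatrix_jacobiMatrix, Fin.succAbove_last, charmatrix_submatrix_castSucc,
      jacobiMatrix_submatrix_castSucc, charmatrix_apply_eq,
      charmatrix_apply_ne _ _ _ (by simp [Fin.ext_iff]), hdiag, hentry]
    simp only [Fin.val_last, Fin.val_castSucc]
    rw [← two_mul, show n + (n + 1) = 2 * n + 1 by ring, pow_succ, pow_mul, pow_mul, neg_one_sq,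
      one_pow, C_pow]
    change _ * (jacobiMatrix a b (n + 1)).charpoly + _ = _
    ring
  · rintro i ⟨h₁, h₂⟩
    have h₁ := Fin.val_ne_of_ne h₁
    have h₂ := Fin.val_ne_of_ne h₂
    simp only [Fin.val_last, Fin.val_castSucc] at h₁ h₂
    rw [charmatrix_jacobiMatrix_eq_zero _ _ (by simp only [Fin.val_last]; omega), mul_zero,
      zero_mul]

end Matrix

open Finset

theorem pow_sub_le_eval_C_mul_prod {n : ℕ} {a z t : ℝ} {r : Fin n → ℝ} (ha : 1 ≤ a)
    (hr : ∀ i, r i ≤ z) (ht : z ≤ t) :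
    (t - z) ^ n ≤ (C a * ∏ i, (X - C (r i))).eval t := by
  have hprod : (t - z) ^ n ≤ ∏ i, (t - r i) := by
    simpa using prod_le_prod (s := univ) (fun i _ ↦ sub_nonneg.mpr ht)
      (fun i _ ↦ sub_le_sub_left (hr i) t)
  rw [eval_mul, eval_C, eval_prod]
  simp only [eval_sub, eval_X, eval_C]
  exact hprod.trans (le_mul_of_one_le_left (hprod.trans' (by positivity)) ha)

theorem gegC_eval_one (lam : ℝ) (n : ℕ) :
    (gegC lam n).eval 1 = ∏ i ∈ range n, (2 * lam + i) / (i + 1) := by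
  induction n using Nat.twoStepInduction with
  | zero => simp [gegC]
  | one => simp [gegC]
  | more n ih₀ ih₁ =>
    simp only [gegC, eval_sub, eval_mul, eval_C, eval_X, ih₀, ih₁, prod_range_succ]
    push_cast
    field_simp
    ring

/-- `b_{k+1}² = (k+2λ)(k+1) / (4(λ+k)(λ+k+1))` is the coefficient in the recurrence
`p_{k+2} = X p_{k+1} - b_{k+1}² p_k` of the monic Gegenbauer polynomials. -/
noncomputable def gegJacobi (lam : ℝ) (n : ℕ) : Matrix (Fin n) (Fin n) ℝ :=
  Matrix.jacobiMatrix 0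
    (fun k ↦ √((((k - 1 : ℕ) : ℝ) + 2 * lam) * k / (4 * (lam + (k - 1 : ℕ)) * (lam + k))))
    n

theorem gegC_eq_C_mul_charpoly {lam : ℝ} (hlam : 0 < lam) (n : ℕ) :
    gegC lam n = C (∏ i ∈ range n, 2 * (lam + i) / (i + 1)) * (gegJacobi lam n).charpoly := by
  induction n using Nat.twoStepInduction with
  | zero => simp [gegC, gegJacobi]
  | one => simp [gegC, gegJacobi, Matrix.charpoly_jacobiMatrix_one]
  | more n ih₀ ih₁ =>
    set L := fun m ↦ ∏ i ∈ range m, 2 * (lam + i) / (i + 1)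
    have hL₁ : 2 * (n + 1 + lam) / (n + 2) * L (n + 1) = L (n + 2) := by
      simp only [L, prod_range_succ]
      push_cast
      field_simp
      ring
    have hL₀ : (n + 2 * lam) / (n + 2) * L n
        = L (n + 2) * ((n + 2 * lam) * (n + 1) / (4 * (lam + n) * (lam + n + 1))) := by
      simp only [L, prod_range_succ]
      push_cast
      field_simp
      ring
    have hb : √((((n + 1 - 1 : ℕ) : ℝ) + 2 * lam) * (n + 1 : ℕ)
        / (4 * (lam + (n + 1 - 1 : ℕ)) * (lam + (n + 1 : ℕ)))) ^ 2
        = (n + 2 * lam) * (n + 1) / (4 * (lam + n) * (lam + n + 1)) := by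
      rw [Real.sq_sqrt (by positivity), Nat.add_sub_cancel]
      push_cast
      ring_nf
    rw [gegJacobi, Matrix.charpoly_jacobiMatrix_succ_succ, hb, ← gegJacobi, ← gegJacobi]
    calc gegC lam (n + 2)
        = C (2 * (n + 1 + lam) / (n + 2) * L (n + 1)) * (X * (gegJacobi lam (n + 1)).charpoly)
          - C ((n + 2 * lam) / (n + 2) * L n) * (gegJacobi lam n).charpoly := by
          rw [gegC, ih₁, ih₀, C_mul, C_mul]; ring
      _ = _ := by rw [hL₁, hL₀, C_mul, Pi.zero_apply, map_zero, sub_zero]; ring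

theorem gegJacobi_isHermitian (lam : ℝ) (n : ℕ) : (gegJacobi lam n).IsHermitian :=
  Matrix.isHermitian_iff_isSymm.mpr (Matrix.jacobiMatrix_isSymm _ _ n)

theorem exists_gegP_eq_C_mul_prod (j : ℕ) {d : ℕ} (hd : 3 ≤ d) :
    ∃ a, 1 ≤ a ∧ ∃ r : Fin j → ℝ, gegP j d = C a * ∏ i, (X - C (r i)) := by
  set lam : ℝ := d / 2 - 1
  have hlam : 0 < lam := by
    have : (3 : ℝ) ≤ d := by exact_mod_cast hd
    simp only [lam]
    linarith
  have hval : 0 < ∏ i ∈ range j, (2 * lam + i) / (i + 1) :=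
    prod_pos fun i _ ↦ by positivity
  have hval_le : ∏ i ∈ range j, (2 * lam + i) / (i + 1)
      ≤ ∏ i ∈ range j, 2 * (lam + i) / (i + 1) :=
    prod_le_prod (fun i _ ↦ by positivity)
      (fun i _ ↦ div_le_div_of_nonneg_right (by linarith [i.cast_nonneg (α := ℝ)])
        (by positivity))
  refine ⟨_, (one_le_div hval).mpr hval_le, (gegJacobi_isHermitian lam j).eigenvalues, ?_⟩
  rw [gegP, gegC_eval_one, gegC_eq_C_mul_charpoly hlam, (gegJacobi_isHermitian lam j).charpoly_eq,
    ← mul_assoc, ← C_mul, inv_mul_eq_div]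
  rfl

theorem stmt11_general (j d : ℕ) (hd : 3 ≤ d) (z : ℝ)
    (hmax : ∀ w : ℝ, (gegP j d).eval w = 0 → w ≤ z) :
    ∀ t : ℝ, z ≤ t → (t - z) ^ j ≤ (gegP j d).eval t := by
  intro t ht
  obtain ⟨a, ha, r, hP⟩ := exists_gegP_eq_C_mul_prod j hd
  have hr : ∀ i, r i ≤ z := fun i ↦
    hmax _ (by simp [hP, eval_prod, prod_eq_zero (mem_univ i)])
  rw [hP]
  exact pow_sub_le_eval_C_mul_prod ha hr ht

/-- if `z` is the largest root of the normalized Gegenbauer polynomial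
`P_{j,d}`, then `P_{j,d}(t) ≥ (t - z)^j` for all `t ≥ z`. -/
theorem stmt11 (j d : ℕ) (hj : 1 ≤ j) (hd : 3 ≤ d) (z : ℝ)
    (hroot : (gegP j d).eval z = 0)
    (hmax : ∀ w : ℝ, (gegP j d).eval w = 0 → w ≤ z) :
    ∀ t : ℝ, z ≤ t → (t - z) ^ j ≤ (gegP j d).eval t :=
  stmt11_general j d hd z hmax
end

section
/- Freedman-type tail inequality for submartingales: let (X_t) be adapted to a filtration (F_t), with E[X_t | F_{t-1}] ≥ 0, |X_t| ≤ a almost surely and E[X_t² | F_{t-1}] ≤ b almost surely for all t ≤ T. Then for all λ > 0, P(∑_{k=1}^T X_k ≤ -λ) ≤ exp(-λ²/(2(Tb + λa))). -/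
/-!
Chernoff's method with the exponent `s = λ / (T b + λ a)`. Since `s a ≤ 1`, the cubic Taylor
bound `eˣ ≤ 1 + x + x² (1/2 + 2 s a / 9)` for `|x| ≤ s a` together with the conditional mean and
second-moment hypotheses gives `E[e^{-s X_t} | F_{t-1}] ≤ 1 + c` with `c = s² (1/2 + 2 s a / 9) b`.
Conditioning successively on `F_{T-1}, …, F_0` bounds `E[e^{-s ∑ X_k}]` by `(1 + c)^T ≤ e^{T c}`,
and `T c - s λ ≤ -λ² / (2 (T b + λ a))` for this choice of `s`.
-/

open MeasureTheory ProbabilityTheory Finset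

lemma Real.exp_le_one_add_add_sq_mul_of_abs_le {x u : ℝ} (hx : |x| ≤ u) (hu : u ≤ 1) :
    Real.exp x ≤ 1 + x + x ^ 2 * (1 / 2 + 2 * u / 9) := by
  have h := (abs_le.mp (Real.exp_bound (hx.trans hu) (n := 3) (by norm_num))).2
  have hcube : |x| ^ 3 ≤ x ^ 2 * u := by
    rw [pow_succ, sq_abs]; exact mul_le_mul_of_nonneg_left hx (sq_nonneg x)
  norm_num [Finset.sum_range_succ, Nat.factorial] at h
  nlinarith

lemma Real.exp_neg_mul_le_exp_mul_of_abs_le {s y a : ℝ} (hs : 0 ≤ s) (hy : |y| ≤ a) :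
    Real.exp (-(s * y)) ≤ Real.exp (s * a) :=
  Real.exp_le_exp.2 (by nlinarith [neg_abs_le y])

lemma bernstein_exponent_le {V lam a s : ℝ} (hV : 0 ≤ V) (hlam : 0 < lam) (ha : 0 < a)
    (hs : s = lam / (V + lam * a)) :
    V * (s ^ 2 * (1 / 2 + 2 * (s * a) / 9)) - s * lam ≤ -lam ^ 2 / (2 * (V + lam * a)) := by
  have hD : 0 < V + lam * a := by positivity
  subst hs
  field_simp
  nlinarith [mul_nonneg hV (mul_pos hlam ha).le, sq_nonneg (lam * a)]

namespace MeasureTheory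

variable {Ω : Type*} {m m0 : MeasurableSpace Ω} {μ : Measure Ω} [IsFiniteMeasure μ]

lemma integrable_finset_prod_of_ae_abs_le {ι : Type*} {Z : ι → Ω → ℝ} {s : Finset ι} {C : ℝ}
    (hZm : ∀ k ∈ s, AEStronglyMeasurable (Z k) μ) (hZ : ∀ k ∈ s, ∀ᵐ ω ∂μ, |Z k ω| ≤ C) :
    Integrable (fun ω => ∏ k ∈ s, Z k ω) μ :=
  (MemLp.prod' (p := fun _ => ⊤) fun k hk => memLp_top_of_bound (hZm k hk) C (hZ k hk)).integrable
    (by simp)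

lemma condExp_exp_neg_mul_le (hm : m ≤ m0) {Y : Ω → ℝ} (hY : AEStronglyMeasurable Y μ)
    {a b s : ℝ} (ha : 0 ≤ a) (hs : 0 ≤ s) (hsa : s * a ≤ 1) (habs : ∀ᵐ ω ∂μ, |Y ω| ≤ a)
    (hmean : 0 ≤ᵐ[μ] μ[Y | m]) (hvar : ∀ᵐ ω ∂μ, (μ[fun ω => Y ω ^ 2 | m]) ω ≤ b) :
    μ[fun ω => Real.exp (-(s * Y ω)) | m]
      ≤ᵐ[μ] fun _ => 1 + s ^ 2 * (1 / 2 + 2 * (s * a) / 9) * b := by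
  set c := s ^ 2 * (1 / 2 + 2 * (s * a) / 9)
  have hc : 0 ≤ c := by positivity
  have hYint : Integrable Y μ := .of_bound hY a (by simpa using habs)
  have hY2int : Integrable (fun ω => Y ω ^ 2) μ :=
    .of_bound (hY.pow 2) (a ^ 2) (by
      filter_upwards [habs] with ω hω
      simpa using pow_le_pow_left₀ (abs_nonneg _) hω 2)
  have hexp : Integrable (fun ω => Real.exp (-(s * Y ω))) μ := by
    refine .of_bound (Real.continuous_exp.comp_aestronglyMeasurable (hY.const_mul s).neg)
      (Real.exp (s * a)) ?_
    filter_upwards [habs] with ω hω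
    rw [Real.norm_eq_abs, Real.abs_exp]
    exact Real.exp_neg_mul_le_exp_mul_of_abs_le hs hω
  set q : Ω → ℝ := (fun _ => 1) + ((-s) • Y + c • fun ω => Y ω ^ 2)
  have hqint : Integrable q μ := (integrable_const 1).add ((hYint.smul (-s)).add (hY2int.smul c))
  have hquad : (fun ω => Real.exp (-(s * Y ω))) ≤ᵐ[μ] q := by
    filter_upwards [habs] with ω hω
    have hx : |-(s * Y ω)| ≤ s * a := by
      rw [abs_neg, abs_mul, abs_of_nonneg hs]; exact mul_le_mul_of_nonneg_left hω hs
    calc Real.exp (-(s * Y ω)) ≤ 1 + -(s * Y ω) + (-(s * Y ω)) ^ 2 * (1 / 2 + 2 * (s * a) / 9) :=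
          Real.exp_le_one_add_add_sq_mul_of_abs_le hx hsa
      _ = q ω := by simp only [q, c, Pi.add_apply, Pi.smul_apply, smul_eq_mul]; ring
  have hcondq : ∀ᵐ ω ∂μ,
      (μ[q | m]) ω = 1 + (-s * (μ[Y | m]) ω + c * (μ[fun ω => Y ω ^ 2 | m]) ω) := by
    filter_upwards [condExp_add (integrable_const 1) ((hYint.smul (-s)).add (hY2int.smul c)) m,
      condExp_add (hYint.smul (-s)) (hY2int.smul c) m, condExp_smul (m := m) (μ := μ) (-s) Y,
      condExp_smul (m := m) (μ := μ) c (fun ω => Y ω ^ 2)] with ω h1 h2 h3 h4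
    rw [h1, Pi.add_apply, h2, Pi.add_apply, h3, h4, condExp_const hm]
    rfl
  filter_upwards [condExp_mono (m := m) hexp hqint hquad, hcondq, hmean, hvar]
    with ω hle hq hmean hvar
  rw [hq] at hle
  nlinarith [mul_nonneg hs hmean, mul_le_mul_of_nonneg_left hvar hc]

lemma integral_prod_le_pow_of_condExp_le [IsProbabilityMeasure μ] {ℱ : Filtration ℕ m0}
    {Z : ℕ → Ω → ℝ} (hadp : Adapted ℱ Z) {T : ℕ} {C K : ℝ} (hZ_nonneg : ∀ k, 0 ≤ Z k)
    (hZ_bdd : ∀ k ∈ Icc 1 T, ∀ᵐ ω ∂μ, |Z k ω| ≤ C) (hK : 0 ≤ K)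
    (hcond : ∀ t < T, μ[Z (t + 1) | ℱ t] ≤ᵐ[μ] fun _ => K) :
    ∫ ω, ∏ k ∈ Icc 1 T, Z k ω ∂μ ≤ K ^ T := by
  have hZm : ∀ k, AEStronglyMeasurable (Z k) μ :=
    fun k => ((hadp k).mono (ℱ.le k) le_rfl).aestronglyMeasurable
  have hint : ∀ t ≤ T, Integrable (fun ω => ∏ k ∈ Icc 1 t, Z k ω) μ := fun t ht =>
    integrable_finset_prod_of_ae_abs_le (fun k _ => hZm k)
      fun k hk => hZ_bdd k (Icc_subset_Icc_right ht hk)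
  suffices ∀ t ≤ T, ∫ ω, ∏ k ∈ Icc 1 t, Z k ω ∂μ ≤ K ^ t from this T le_rfl
  intro t
  induction t with
  | zero => simp
  | succ t ih =>
    intro ht
    set P : Ω → ℝ := fun ω => ∏ k ∈ Icc 1 t, Z k ω
    have hPm : StronglyMeasurable[ℱ t] P := (Finset.measurable_prod _ fun k hk =>
      (hadp k).mono (ℱ.mono (mem_Icc.mp hk).2) le_rfl).stronglyMeasurable
    have hstep : (fun ω => ∏ k ∈ Icc 1 (t + 1), Z k ω) = P * Z (t + 1) := by
      ext ω; exact prod_Icc_succ_top (by omega) _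
    have hZint : Integrable (Z (t + 1)) μ := by
      simpa using integrable_finset_prod_of_ae_abs_le (s := {t + 1}) (fun k _ => hZm k)
        fun k hk => hZ_bdd k (by simp_all)
    have hpull : μ[P * Z (t + 1) | ℱ t] =ᵐ[μ] P * μ[Z (t + 1) | ℱ t] :=
      condExp_mul_of_stronglyMeasurable_left hPm (hstep ▸ hint (t + 1) ht) hZint
    have hle : P * μ[Z (t + 1) | ℱ t] ≤ᵐ[μ] fun ω => K * P ω := by
      filter_upwards [hcond t ht] with ω hω
      rw [mul_comm K]
      exact mul_le_mul_of_nonneg_left hω (prod_nonneg fun k _ => hZ_nonneg k ω)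
    have hnonneg : 0 ≤ᵐ[μ] P * μ[Z (t + 1) | ℱ t] := by
      filter_upwards [condExp_nonneg (m := ℱ t) (ae_of_all μ (hZ_nonneg (t + 1)))] with ω hω
      exact mul_nonneg (prod_nonneg fun k _ => hZ_nonneg k ω) hω
    calc ∫ ω, ∏ k ∈ Icc 1 (t + 1), Z k ω ∂μ
        = ∫ ω, (μ[P * Z (t + 1) | ℱ t]) ω ∂μ := by rw [hstep, integral_condExp (ℱ.le t)]
      _ = ∫ ω, (P * μ[Z (t + 1) | ℱ t]) ω ∂μ := integral_congr_ae hpull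
      _ ≤ ∫ ω, K * P ω ∂μ :=
          integral_mono_of_nonneg hnonneg ((hint t (by omega)).const_mul K) hle
      _ ≤ K ^ (t + 1) := by
          rw [integral_const_mul, pow_succ']
          exact mul_le_mul_of_nonneg_left (ih (by omega)) hK

end MeasureTheory

lemma Real.exp_neg_mul_sum {ι : Type*} (t : Finset ι) (f : ι → ℝ) (s : ℝ) :
    Real.exp (-s * ∑ i ∈ t, f i) = ∏ i ∈ t, Real.exp (-(s * f i)) := by
  simp only [neg_mul, Finset.mul_sum, Real.exp_sum]

namespace ProbabilityTheory

variable {Ω : Type*} {m0 : MeasurableSpace Ω} {μ : Measure Ω}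
  {ℱ : Filtration ℕ m0} {X : ℕ → Ω → ℝ} {T : ℕ} {a b s : ℝ}

lemma ae_abs_exp_neg_mul_le (hs : 0 ≤ s) (habs : ∀ t, 1 ≤ t → t ≤ T → ∀ᵐ ω ∂μ, |X t ω| ≤ a) :
    ∀ k ∈ Icc 1 T, ∀ᵐ ω ∂μ, |Real.exp (-(s * X k ω))| ≤ Real.exp (s * a) := fun k hk => by
  filter_upwards [habs k (mem_Icc.1 hk).1 (mem_Icc.1 hk).2] with ω hω
  rw [Real.abs_exp]
  exact Real.exp_neg_mul_le_exp_mul_of_abs_le hs hω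

lemma integrable_exp_neg_mul_sum [IsFiniteMeasure μ] (hadp : Adapted ℱ X) (hs : 0 ≤ s)
    (habs : ∀ t, 1 ≤ t → t ≤ T → ∀ᵐ ω ∂μ, |X t ω| ≤ a) :
    Integrable (fun ω => Real.exp (-s * ∑ k ∈ Icc 1 T, X k ω)) μ := by
  simp only [Real.exp_neg_mul_sum]
  exact integrable_finset_prod_of_ae_abs_le
    (fun k _ => (((hadp k).mono (ℱ.le k) le_rfl).const_mul s).neg.exp.aestronglyMeasurable)
    (ae_abs_exp_neg_mul_le hs habs)

lemma mgf_neg_sum_le [IsProbabilityMeasure μ] (hadp : Adapted ℱ X) (ha : 0 ≤ a) (hb : 0 ≤ b)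
    (hs : 0 ≤ s) (hsa : s * a ≤ 1)
    (hcond : ∀ t, 1 ≤ t → t ≤ T → 0 ≤ᵐ[μ] μ[X t | ℱ (t - 1)])
    (habs : ∀ t, 1 ≤ t → t ≤ T → ∀ᵐ ω ∂μ, |X t ω| ≤ a)
    (hvar : ∀ t, 1 ≤ t → t ≤ T → ∀ᵐ ω ∂μ, (μ[fun ω' => (X t ω') ^ 2 | ℱ (t - 1)]) ω ≤ b) :
    mgf (fun ω => ∑ k ∈ Icc 1 T, X k ω) μ (-s)
      ≤ (1 + s ^ 2 * (1 / 2 + 2 * (s * a) / 9) * b) ^ T := by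
  simp only [mgf, Real.exp_neg_mul_sum]
  refine integral_prod_le_pow_of_condExp_le (Z := fun k ω => Real.exp (-(s * X k ω)))
    (fun k => ((hadp k).const_mul s).neg.exp) (fun k ω => (Real.exp_pos _).le)
    (ae_abs_exp_neg_mul_le hs habs) (by positivity) fun t ht => ?_
  exact condExp_exp_neg_mul_le (ℱ.le t)
    ((hadp (t + 1)).mono (ℱ.le _) le_rfl).aestronglyMeasurable ha hs hsa
    (habs (t + 1) (by omega) ht) (by simpa using hcond (t + 1) (by omega) ht)
    (by simpa using hvar (t + 1) (by omega) ht)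

end ProbabilityTheory

theorem stmt14_general {Ω : Type*} {m0 : MeasurableSpace Ω} {μ : Measure Ω}
    [IsProbabilityMeasure μ] (ℱ : Filtration ℕ m0) (X : ℕ → Ω → ℝ)
    (hadp : Adapted ℱ X) (T : ℕ) (a b : ℝ) (ha : 0 < a) (hb : 0 < b)
    (hcond : ∀ t, 1 ≤ t → t ≤ T → 0 ≤ᵐ[μ] μ[X t | ℱ (t - 1)])
    (habs : ∀ t, 1 ≤ t → t ≤ T → ∀ᵐ ω ∂μ, |X t ω| ≤ a)
    (hvar : ∀ t, 1 ≤ t → t ≤ T →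
      ∀ᵐ ω ∂μ, (μ[fun ω' => (X t ω') ^ 2 | ℱ (t - 1)]) ω ≤ b)
    (lam : ℝ) (hlam : 0 < lam) :
    μ {ω | ∑ k ∈ Finset.Icc 1 T, X k ω ≤ -lam}
      ≤ ENNReal.ofReal (Real.exp (-lam ^ 2 / (2 * ((T : ℝ) * b + lam * a)))) := by
  set s := lam / ((T : ℝ) * b + lam * a)
  have hs : 0 ≤ s := by positivity
  have hsa : s * a ≤ 1 := by
    have : 0 ≤ (T : ℝ) * b := by positivity
    rw [div_mul_eq_mul_div, div_le_one (by positivity)]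
    linarith
  set c := s ^ 2 * (1 / 2 + 2 * (s * a) / 9) * b
  have hpow : (1 + c) ^ T ≤ Real.exp (T * c) := by
    rw [Real.exp_nat_mul]
    exact pow_le_pow_left₀ (by positivity) (by linarith [Real.add_one_le_exp c]) T
  have hexponent : T * c - s * lam ≤ -lam ^ 2 / (2 * ((T : ℝ) * b + lam * a)) := by
    have := bernstein_exponent_le (V := T * b) (by positivity) hlam ha rfl
    simp only [c]; linarith
  rw [← ENNReal.ofReal_toReal (measure_ne_top μ _)]
  refine ENNReal.ofReal_le_ofReal ?_
  calc μ.real {ω | ∑ k ∈ Finset.Icc 1 T, X k ω ≤ -lam}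
      ≤ Real.exp (-(-s) * -lam) * mgf (fun ω => ∑ k ∈ Finset.Icc 1 T, X k ω) μ (-s) :=
        measure_le_le_exp_mul_mgf _ (neg_nonpos.2 hs) (integrable_exp_neg_mul_sum hadp hs habs)
    _ ≤ Real.exp (-(s * lam)) * Real.exp (T * c) := by
        rw [neg_neg, mul_neg]
        gcongr
        exact (mgf_neg_sum_le hadp ha.le hb.le hs hsa hcond habs hvar).trans hpow
    _ ≤ _ := by
        rw [← Real.exp_add, Real.exp_le_exp]
        linarith

/-- Freedman-type tail inequality for submartingale increments:
if `(X_t)` is adapted to a filtration `(F_t)` with `E[X_t | F_{t-1}] ≥ 0`,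
`|X_t| ≤ a` a.s. and `E[X_t² | F_{t-1}] ≤ b` a.s. for all `1 ≤ t ≤ T`, then for all
`λ > 0`, `P(∑_{k=1}^T X_k ≤ -λ) ≤ exp(-λ²/(2(Tb + λa)))`. -/
theorem stmt14 {Ω : Type*} {m0 : MeasurableSpace Ω} {μ : Measure Ω}
    [IsProbabilityMeasure μ] (ℱ : Filtration ℕ m0) (X : ℕ → Ω → ℝ)
    (hadp : Adapted ℱ X) (T : ℕ) (hT : 1 ≤ T) (a b : ℝ) (ha : 0 < a) (hb : 0 < b)
    (hcond : ∀ t, 1 ≤ t → t ≤ T → 0 ≤ᵐ[μ] μ[X t | ℱ (t - 1)])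
    (habs : ∀ t, 1 ≤ t → t ≤ T → ∀ᵐ ω ∂μ, |X t ω| ≤ a)
    (hvar : ∀ t, 1 ≤ t → t ≤ T →
      ∀ᵐ ω ∂μ, (μ[fun ω' => (X t ω') ^ 2 | ℱ (t - 1)]) ω ≤ b)
    (lam : ℝ) (hlam : 0 < lam) :
    μ {ω | ∑ k ∈ Finset.Icc 1 T, X k ω ≤ -lam}
      ≤ ENNReal.ofReal (Real.exp (-lam ^ 2 / (2 * ((T : ℝ) * b + lam * a)))) :=
  stmt14_general ℱ X hadp T a b ha hb hcond habs hvar lam hlam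
end
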